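/- arXiv:2304.09815 — 2 statements merged into one kernel-verified Lean document; each statement's English description precedes it below -/
import Mathlib

section
/- Fix 0 < a < 1 and let α > 1. Define x(α) = (1/2)·((α^{1+a} − α^{2a})/(α^{1+a} − 1))^{(1−a)/(2a)} · ((1 − α^{2a})/(α^{1+a} − 1)). Then L_a ≤ x(α) < 0, ψ₋₁(a, x(α)) = (1/(2a))·log((α^{1−a} − 1)/(α^{1+a} − 1)), and ψ₀(a, x(α)) = log α + ψ₋₁(a, x(α)). Equivalently, the two numbers w₋ = (1/(2a))·log((α^{1−a}−1)/(α^{1+a}−1)) and w₀ = log α + w₋ satisfy w₋ ≤ M_a ≤ w₀ and f(a,w₀) = f(a,w₋) = x(α). -/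
/-!
Write `f(a,w) = e^{(1-a)w} (e^{2aw} - 1) / 2`. The defining relation
`e^{2a w₋} (α^{1+a} - 1) = α^{1-a} - 1` of `w₋` is exactly the condition `f(a, log α + w₋) = f(a, w₋)`,
and `e^{2a w₀} = (α^{1+a} - α^{2a}) / (α^{1+a} - 1)` turns `f(a, w₀)` into `x(α)`.
Since `f(a,·)` is strictly decreasing up to `M_a` and strictly increasing after it, the two distinct
points `w₋ < w₀` with equal values lie on either side of `M_a`. Then `x(α) < 0` because
`w₋ < M_a < 0`, `L_a = f(a, M_a) ≤ x(α)`, and injectivity on each side identifies the branches.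
-/

noncomputable def fab (a w : ℝ) : ℝ := Real.sinh (a * w) * Real.exp w

noncomputable def Ma (a : ℝ) : ℝ := (1 / (2 * a)) * Real.log ((1 - a) / (1 + a))

noncomputable def La (a : ℝ) : ℝ :=
  -(a / Real.sqrt (1 - a ^ 2)) * ((1 - a) / (1 + a)) ^ (1 / (2 * a))

open Real Set

lemma fab_eq_exp_mul (a w : ℝ) : fab a w = exp ((1 - a) * w) * (exp (2 * a * w) - 1) / 2 := by
  have h₁ : exp (a * w) * exp w = exp ((1 - a) * w) * exp (2 * a * w) := by
    rw [← exp_add, ← exp_add]; ring_nf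
  have h₂ : exp (-(a * w)) * exp w = exp ((1 - a) * w) := by rw [← exp_add]; ring_nf
  rw [fab, sinh_eq]
  linear_combination h₁ / 2 - h₂ / 2

lemma hasDerivAt_fab (a w : ℝ) :
    HasDerivAt (fab a) (exp ((1 - a) * w) * ((1 + a) * exp (2 * a * w) - (1 - a)) / 2) w := by
  have hlin (c : ℝ) : HasDerivAt (fun w => exp (c * w)) (exp (c * w) * c) w := by
    simpa using ((hasDerivAt_id w).const_mul c).exp
  have h := ((hlin (1 + a)).sub (hlin (1 - a))).div_const 2
  have hfab : fab a = fun w => (exp ((1 + a) * w) - exp ((1 - a) * w)) / 2 := by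
    ext w; rw [fab_eq_exp_mul, mul_sub, ← exp_add]; ring_nf
  rw [hfab]
  refine h.congr_deriv ?_
  rw [show (1 + a) * w = (1 - a) * w + 2 * a * w by ring, exp_add]
  ring

lemma exp_two_mul_mul_log (a s : ℝ) (ha : a ≠ 0) (hs : 0 < s) :
    exp (2 * a * (1 / (2 * a) * log s)) = s := by
  rw [← mul_assoc, mul_one_div_cancel (by positivity), one_mul, exp_log hs]

lemma fab_mul_log (a s : ℝ) (ha : a ≠ 0) (hs : 0 < s) :
    fab a (1 / (2 * a) * log s) = s ^ ((1 - a) / (2 * a)) * (s - 1) / 2 := by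
  rw [fab_eq_exp_mul, exp_two_mul_mul_log a s ha hs, rpow_def_of_pos hs]
  congr 3
  field_simp

lemma fab_add_eq_fab (a t w : ℝ)
    (h : exp (2 * a * w) * (exp ((1 + a) * t) - 1) = exp ((1 - a) * t) - 1) :
    fab a (t + w) = fab a w := by
  have hsplit : exp ((1 - a) * (t + w)) * (exp (2 * a * (t + w)) - 1)
      = exp ((1 - a) * w) * (exp (2 * a * w) * exp ((1 + a) * t) - exp ((1 - a) * t)) := by
    simp only [mul_add, exp_add, show (1 + a) * t = (1 - a) * t + 2 * a * t by ring]
    ring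
  rw [fab_eq_exp_mul, fab_eq_exp_mul, hsplit]
  congr 2
  linear_combination h

lemma fab_neg_of_neg {a w : ℝ} (ha : 0 < a) (hw : w < 0) : fab a w < 0 :=
  mul_neg_of_neg_of_pos (sinh_neg_iff.2 (mul_neg_of_pos_of_neg ha hw)) (exp_pos w)

lemma Ma_neg {a : ℝ} (ha0 : 0 < a) (ha1 : a < 1) : Ma a < 0 :=
  mul_neg_of_pos_of_neg (by positivity)
    (log_neg (by apply div_pos <;> linarith) ((div_lt_one (by linarith)).2 (by linarith)))

lemma exp_two_mul_mul_Ma {a : ℝ} (ha0 : 0 < a) (ha1 : a < 1) :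
    exp (2 * a * Ma a) = (1 - a) / (1 + a) :=
  exp_two_mul_mul_log a _ ha0.ne' (by apply div_pos <;> linarith)

lemma one_sub_lt_mul_exp_iff {a w : ℝ} (ha0 : 0 < a) (ha1 : a < 1) :
    1 - a < (1 + a) * exp (2 * a * w) ↔ Ma a < w := by
  rw [← div_lt_iff₀' (by linarith), ← exp_two_mul_mul_Ma ha0 ha1, exp_lt_exp,
    mul_lt_mul_iff_of_pos_left (by positivity)]

lemma mul_exp_lt_one_sub_iff {a w : ℝ} (ha0 : 0 < a) (ha1 : a < 1) :
    (1 + a) * exp (2 * a * w) < 1 - a ↔ w < Ma a := by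
  rw [← lt_div_iff₀' (by linarith), ← exp_two_mul_mul_Ma ha0 ha1, exp_lt_exp,
    mul_lt_mul_iff_of_pos_left (by positivity)]

lemma strictMonoOn_fab {a : ℝ} (ha0 : 0 < a) (ha1 : a < 1) : StrictMonoOn (fab a) (Ici (Ma a)) := by
  refine strictMonoOn_of_hasDerivWithinAt_pos (convex_Ici _)
    (fun w _ => (hasDerivAt_fab a w).continuousAt.continuousWithinAt)
    (fun w _ => (hasDerivAt_fab a w).hasDerivWithinAt) fun w hw => ?_
  rw [interior_Ici] at hw
  have := (one_sub_lt_mul_exp_iff ha0 ha1).2 hw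
  have := exp_pos ((1 - a) * w)
  positivity

lemma strictAntiOn_fab {a : ℝ} (ha0 : 0 < a) (ha1 : a < 1) : StrictAntiOn (fab a) (Iic (Ma a)) := by
  refine strictAntiOn_of_hasDerivWithinAt_neg (convex_Iic _)
    (fun w _ => (hasDerivAt_fab a w).continuousAt.continuousWithinAt)
    (fun w _ => (hasDerivAt_fab a w).hasDerivWithinAt) fun w hw => ?_
  rw [interior_Iic] at hw
  have := (mul_exp_lt_one_sub_iff ha0 ha1).2 hw
  have := exp_pos ((1 - a) * w)
  nlinarith

lemma fab_Ma {a : ℝ} (ha0 : 0 < a) (ha1 : a < 1) : fab a (Ma a) = La a := by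
  set s : ℝ := (1 - a) / (1 + a) with hs
  have hs0 : 0 < s := by apply div_pos <;> linarith
  have hsplit : s ^ (1 / (2 * a)) = s ^ ((1 - a) / (2 * a)) * s ^ (1 / 2 : ℝ) := by
    rw [← rpow_add hs0]
    congr 1; field_simp; ring
  have hsqrt : s ^ (1 / 2 : ℝ) = √(1 - a ^ 2) / (1 + a) := by
    rw [← sqrt_eq_rpow, show s = (1 - a ^ 2) / (1 + a) ^ 2 by rw [hs]; field_simp; ring,
      sqrt_div' _ (by positivity), sqrt_sq (by linarith)]
  have hsq : 0 < √(1 - a ^ 2) := sqrt_pos.2 (by nlinarith)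
  rw [Ma, fab_mul_log a s ha0.ne' hs0, La, ← hs, hsplit, hsqrt, hs]
  field_simp
  ring

lemma La_le_fab {a : ℝ} (ha0 : 0 < a) (ha1 : a < 1) (w : ℝ) : La a ≤ fab a w := by
  rw [← fab_Ma ha0 ha1]
  rcases le_total w (Ma a) with hw | hw
  · exact (strictAntiOn_fab ha0 ha1).antitoneOn hw self_mem_Iic hw
  · exact (strictMonoOn_fab ha0 ha1).monotoneOn self_mem_Ici hw hw

lemma lt_and_lt_of_map_eq {α β : Type*} [LinearOrder α] [Preorder β] {f : α → β} {m u v : α}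
    (hanti : StrictAntiOn f (Iic m)) (hmono : StrictMonoOn f (Ici m)) (huv : u < v)
    (hf : f u = f v) : u < m ∧ m < v := by
  constructor <;> by_contra! h
  · exact (hmono h (h.trans huv.le) huv).ne hf
  · exact (hanti (huv.le.trans h) h huv).ne' hf

lemma fab_log_add_mul_log {a α r : ℝ} (ha : a ≠ 0) (hα : 0 < α) (hr : 0 < r)
    (h : r * (α ^ (1 + a) - 1) = α ^ (1 - a) - 1) :
    fab a (log α + 1 / (2 * a) * log r) = fab a (1 / (2 * a) * log r) := by
  refine fab_add_eq_fab a _ _ ?_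
  rw [exp_two_mul_mul_log a r ha hr, mul_comm (1 + a), mul_comm (1 - a), ← rpow_def_of_pos hα,
    ← rpow_def_of_pos hα, h]

lemma log_add_mul_log {a α r : ℝ} (ha : a ≠ 0) (hα : 0 < α) (hr : 0 < r) :
    log α + 1 / (2 * a) * log r = 1 / (2 * a) * log (α ^ (2 * a) * r) := by
  rw [log_mul (rpow_pos_of_pos hα _).ne' hr.ne', log_rpow hα]
  field_simp

/-- Simultaneous parametrization of both branches of `ψ(a,·)` for `α > 1`. -/
theorem stmt_5 (a α : ℝ) (ha0 : 0 < a) (ha1 : a < 1) (hα : 1 < α)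
    (psi0 psi1 : ℝ → ℝ)
    (hpsi0 : ∀ x, La a ≤ x → Ma a ≤ psi0 x ∧ fab a (psi0 x) = x)
    (hpsi1 : ∀ x, La a ≤ x → x < 0 → psi1 x ≤ Ma a ∧ fab a (psi1 x) = x) :
    let x : ℝ := (1 / 2) * ((α ^ (1 + a) - α ^ (2 * a)) / (α ^ (1 + a) - 1)) ^ ((1 - a) / (2 * a))
      * ((1 - α ^ (2 * a)) / (α ^ (1 + a) - 1))
    let wm : ℝ := (1 / (2 * a)) * Real.log ((α ^ (1 - a) - 1) / (α ^ (1 + a) - 1))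
    let w0 : ℝ := Real.log α + wm
    La a ≤ x ∧ x < 0 ∧
    psi1 x = wm ∧ psi0 x = w0 ∧
    wm ≤ Ma a ∧ Ma a ≤ w0 ∧ fab a w0 = x ∧ fab a wm = x := by
  intro x wm w0
  have hα0 : 0 < α := one_pos.trans hα
  have hA : 1 < α ^ (1 + a) := one_lt_rpow hα (by linarith)
  have hC : 1 < α ^ (1 - a) := one_lt_rpow hα (by linarith)
  set r := (α ^ (1 - a) - 1) / (α ^ (1 + a) - 1) with hr
  have hr0 : 0 < r := div_pos (by linarith) (by linarith)
  have hrA : r * (α ^ (1 + a) - 1) = α ^ (1 - a) - 1 := div_mul_cancel₀ _ (by linarith)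
  have hs : (α ^ (1 + a) - α ^ (2 * a)) / (α ^ (1 + a) - 1) = α ^ (2 * a) * r := by
    rw [hr, ← mul_div_assoc, mul_sub, mul_one, ← rpow_add hα0]
    ring_nf
  have hw0x : fab a w0 = x := by
    rw [show w0 = _ from log_add_mul_log ha0.ne' hα0 hr0, ← hs,
      fab_mul_log a _ ha0.ne' (by rw [hs]; positivity), div_sub_one (by linarith)]
    simp only [x]
    ring
  have hwmx : fab a wm = x := (fab_log_add_mul_log ha0.ne' hα0 hr0 hrA).symm.trans hw0x
  obtain ⟨hwmMa, hMaw0⟩ := lt_and_lt_of_map_eq (strictAntiOn_fab ha0 ha1)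
    (strictMonoOn_fab ha0 ha1) (lt_add_of_pos_left wm (log_pos hα)) (hwmx.trans hw0x.symm)
  have hLax : La a ≤ x := hwmx ▸ La_le_fab ha0 ha1 wm
  have hx0 : x < 0 := hwmx ▸ fab_neg_of_neg ha0 (hwmMa.trans (Ma_neg ha0 ha1))
  obtain ⟨hψ₀Ma, hψ₀x⟩ := hpsi0 x hLax
  obtain ⟨hψ₁Ma, hψ₁x⟩ := hpsi1 x hLax hx0
  refine ⟨hLax, hx0, ?_, ?_, hwmMa.le, hMaw0.le, hw0x, hwmx⟩
  · exact (strictAntiOn_fab ha0 ha1).injOn hψ₁Ma hwmMa.le (hψ₁x.trans hwmx.symm)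
  · exact (strictMonoOn_fab ha0 ha1).injOn hψ₀Ma hMaw0.le (hψ₀x.trans hw0x.symm)
end

section
/- Fix 0 < a < 1. Then: (1) lim_{x→0⁻} ( ψ₋₁(a,x) − log(−2x)/(1−a) ) = 0, the limit taken over x in the domain [L_a, 0) of ψ₋₁(a,·); and (2) for every x with L_a ≤ x < 0, ψ₋₁(a,x) ≥ log(−2x)/(1−a) − log(1 − (−2x)^{2a/(1−a)}). -/
/-!
Put `t = e^{2aw}`. Then `−2 f(a,w) = e^{(1−a)w} (1 − t)`, so for `x = f(a,w)`
`w − log(−2x)/(1−a) = −log(1 − t)/(1−a) ≥ 0`.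
On the branch `w ≤ M_a` we have `t ≤ (1−a)/(1+a)`, hence `1 − t ≥ 2a/(1+a)` and
`e^{(1−a)w} ≤ −x (1+a)/a`; thus `w → −∞` and `t → 0` as `x → 0⁻`, which gives the limit.
For the lower bound, `w ≥ log(−2x)/(1−a)` gives `t ≥ (−2x)^{2a/(1−a)}`, and `1/(1−a) ≥ 1`.
-/

open Real Filter Set Topology

section Branch

variable {a w : ℝ}

lemma neg_two_mul_fab (a w : ℝ) :
    -2 * fab a w = exp ((1 - a) * w) * (1 - exp (2 * a * w)) := by
  rw [fab, sinh_eq, show (1 - a) * w = -(a * w) + w by ring,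
    show 2 * a * w = a * w + a * w by ring, exp_add, exp_add, exp_neg]
  field_simp
  ring

lemma exp_two_mul_le_of_le_Ma (ha0 : 0 < a) (ha1 : a < 1) (hw : w ≤ Ma a) :
    exp (2 * a * w) ≤ (1 - a) / (1 + a) := by
  have hMa : 2 * a * Ma a = log ((1 - a) / (1 + a)) := by
    rw [Ma]
    field_simp
  calc exp (2 * a * w) ≤ exp (2 * a * Ma a) := exp_le_exp.mpr (by nlinarith)
    _ = (1 - a) / (1 + a) := by rw [hMa, exp_log (by apply div_pos <;> linarith)]

lemma exp_two_mul_lt_one_of_le_Ma (ha0 : 0 < a) (ha1 : a < 1) (hw : w ≤ Ma a) :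
    exp (2 * a * w) < 1 :=
  (exp_two_mul_le_of_le_Ma ha0 ha1 hw).trans_lt <| (div_lt_one (by linarith)).mpr (by linarith)

lemma fab_neg (ht : exp (2 * a * w) < 1) : fab a w < 0 := by
  have := neg_two_mul_fab a w
  have := mul_pos (exp_pos ((1 - a) * w)) (sub_pos.mpr ht)
  linarith

lemma sub_log_neg_two_mul_fab (ha1 : a < 1) (ht : exp (2 * a * w) < 1) :
    w - log (-2 * fab a w) / (1 - a) = -log (1 - exp (2 * a * w)) / (1 - a) := by
  rw [neg_two_mul_fab, log_mul (exp_ne_zero _) (by linarith), log_exp]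
  field_simp [show (1 - a) ≠ 0 by linarith]
  ring

lemma log_neg_two_mul_fab_div_le (ha1 : a < 1) (ht : exp (2 * a * w) < 1) :
    log (-2 * fab a w) / (1 - a) ≤ w := by
  have hlog : log (1 - exp (2 * a * w)) ≤ 0 :=
    log_nonpos (by linarith) (by linarith [exp_pos (2 * a * w)])
  have := sub_log_neg_two_mul_fab ha1 ht
  have : 0 ≤ -log (1 - exp (2 * a * w)) / (1 - a) := div_nonneg (by linarith) (by linarith)
  linarith

lemma mul_le_log_neg_fab_add (ha0 : 0 < a) (ha1 : a < 1) (hw : w ≤ Ma a) :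
    (1 - a) * w ≤ log (-fab a w) + log ((1 + a) / a) := by
  have htb : 2 * a / (1 + a) ≤ 1 - exp (2 * a * w) := by
    have := exp_two_mul_le_of_le_Ma ha0 ha1 hw
    have : 2 * a / (1 + a) = 1 - (1 - a) / (1 + a) := by field_simp; ring
    linarith
  have hbound : exp ((1 - a) * w) ≤ -fab a w * ((1 + a) / a) := by
    have h := mul_le_mul_of_nonneg_left htb (exp_pos ((1 - a) * w)).le
    rw [← neg_two_mul_fab] at h
    have : -2 * fab a w = -fab a w * ((1 + a) / a) * (2 * a / (1 + a)) := by field_simp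
    rw [this] at h
    exact le_of_mul_le_mul_right h (by positivity)
  have hfab := fab_neg (exp_two_mul_lt_one_of_le_Ma ha0 ha1 hw)
  rw [← log_mul (by linarith) (by positivity), ← log_exp ((1 - a) * w)]
  exact log_le_log (exp_pos _) hbound

lemma log_div_sub_log_le (ha0 : 0 < a) (ha1 : a < 1) (ht : exp (2 * a * w) < 1) :
    log (-2 * fab a w) / (1 - a) - log (1 - (-2 * fab a w) ^ (2 * a / (1 - a))) ≤ w := by
  have h1a : 0 < 1 - a := by linarith
  have hy : 0 < -2 * fab a w := by linarith [fab_neg ht]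
  have hlog : log (1 - exp (2 * a * w)) ≤ 0 :=
    log_nonpos (by linarith) (by linarith [exp_pos (2 * a * w)])
  have hs : (-2 * fab a w) ^ (2 * a / (1 - a)) ≤ exp (2 * a * w) := by
    rw [rpow_def_of_pos hy, exp_le_exp]
    have := mul_le_mul_of_nonneg_right (log_neg_two_mul_fab_div_le ha1 ht)
      (show 0 ≤ 2 * a by linarith)
    calc log (-2 * fab a w) * (2 * a / (1 - a))
        = log (-2 * fab a w) / (1 - a) * (2 * a) := by ring
      _ ≤ 2 * a * w := by linarith
  have hcmp : log (1 - exp (2 * a * w)) ≤ log (1 - (-2 * fab a w) ^ (2 * a / (1 - a))) :=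
    log_le_log (by linarith) (by linarith)
  have hdiv : -log (1 - exp (2 * a * w)) ≤ -log (1 - exp (2 * a * w)) / (1 - a) := by
    rw [le_div_iff₀ h1a]
    nlinarith
  linarith [sub_log_neg_two_mul_fab ha1 ht]

end Branch

lemma tendsto_neg_log_one_sub_div (c : ℝ) :
    Tendsto (fun t => -log (1 - t) / c) (𝓝 0) (𝓝 0) := by
  have : ContinuousAt (fun t : ℝ => -log (1 - t) / c) 0 :=
    ((continuousAt_log (by norm_num)).comp (by fun_prop)).neg.div_const c
  simpa using this.tendsto

/-- Behaviour of `ψ₋₁(a,x)` as `x → 0⁻`: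
`ψ₋₁(a,x) − log(−2x)/(1−a) → 0`, together with a lower bound on the branch. -/
theorem stmt_17 (a : ℝ) (ha0 : 0 < a) (ha1 : a < 1) (psi1 : ℝ → ℝ)
    (hpsi1 : ∀ x, La a ≤ x → x < 0 → psi1 x ≤ Ma a ∧ fab a (psi1 x) = x) :
    Filter.Tendsto (fun x => psi1 x - Real.log (-2 * x) / (1 - a))
      (nhdsWithin 0 (Set.Ico (La a) 0)) (nhds 0) ∧
    ∀ x : ℝ, La a ≤ x → x < 0 →
      Real.log (-2 * x) / (1 - a) - Real.log (1 - (-2 * x) ^ (2 * a / (1 - a)))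
        ≤ psi1 x := by
  refine ⟨?_, fun x hxl hx0 => ?_⟩
  · have hbranch : ∀ᶠ x in 𝓝[Ico (La a) 0] 0, psi1 x ≤ Ma a ∧ fab a (psi1 x) = x :=
      eventually_nhdsWithin_of_forall fun x hx => hpsi1 x hx.1 hx.2
    have hψ : Tendsto psi1 (𝓝[Ico (La a) 0] 0) atBot := by
      have hlog : Tendsto (fun x => (log x + log ((1 + a) / a)) / (1 - a))
          (𝓝[Ico (La a) 0] 0) atBot :=
        ((tendsto_atBot_add_const_right _ _ tendsto_log_nhdsNE_zero).atBot_div_const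
          (by linarith)).mono_left (nhdsWithin_mono _ fun x hx => hx.2.ne)
      refine tendsto_atBot_mono' _ (hbranch.mono fun x hx => ?_) hlog
      have h := mul_le_log_neg_fab_add ha0 ha1 hx.1
      rw [hx.2, log_neg_eq_log] at h
      rw [le_div_iff₀ (by linarith)]
      linarith
    have ht : Tendsto (fun x => exp (2 * a * psi1 x)) (𝓝[Ico (La a) 0] 0) (𝓝 0) :=
      tendsto_exp_atBot.comp (hψ.const_mul_atBot (by linarith))
    refine ((tendsto_neg_log_one_sub_div (1 - a)).comp ht).congr' (hbranch.mono fun x hx => ?_)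
    have := sub_log_neg_two_mul_fab ha1 (exp_two_mul_lt_one_of_le_Ma ha0 ha1 hx.1)
    rw [hx.2] at this
    exact this.symm
  · obtain ⟨hw, hfw⟩ := hpsi1 x hxl hx0
    simpa only [hfw] using log_div_sub_log_le ha0 ha1 (exp_two_mul_lt_one_of_le_Ma ha0 ha1 hw)
end
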